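/- arXiv:2211.08091 — 2 statements merged into one kernel-verified Lean document; each statement's English description precedes it below -/
import Mathlib

section
/- If the problem DT_C(v) of reconstructing a digital convex set with vertical X-ray v ∈ ℤ^m (with v_0 ≥ 1 and v_{m-1} ≥ 1) admits a solution contained in the strip [0,m-1]×ℤ, then it admits a solution S whose lowest point in column 0 is the origin (0,0) and whose lowest point in column m-1 has y-coordinate in [0, m-2]. -/
/-- Digital convexity: `S = conv_ℝ²(S) ∩ ℤ²`. -/
def DigitalConvex (S : Finset (ℤ × ℤ)) : Prop :=
  ∀ p : ℤ × ℤ,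
    ((p.1 : ℝ), (p.2 : ℝ)) ∈ convexHull ℝ ((fun q : ℤ × ℤ => ((q.1 : ℝ), (q.2 : ℝ))) '' ↑S) →
    p ∈ S

/-!
A vertical shear `(x, y) ↦ (x, y + t x + a)` with `t, a ∈ ℤ` is a bijection of `ℤ²` induced by an
affine bijection of `ℝ²`, so it preserves digital convexity; it fixes every column, so it
preserves the vertical X-ray. Let `y₀`, `y₁` be the lowest ordinates in columns `0` and `n = m - 1`.
The shift `a = -y₀` moves the lowest point of column `0` to the origin, and the slope
`t = -⌊(y₁ - y₀) / n⌋` then moves the lowest point of column `n` to height `(y₁ - y₀) mod n`,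
which lies in `[0, n - 1] = [0, m - 2]`.
-/

def toRealPoint (q : ℤ × ℤ) : ℝ × ℝ := ((q.1 : ℝ), (q.2 : ℝ))

lemma DigitalConvex.image_of_affineMap {S : Finset (ℤ × ℤ)} (hS : DigitalConvex S)
    {f : ℤ × ℤ → ℤ × ℤ} (hf : Function.Surjective f) (A : ℝ × ℝ →ᵃ[ℝ] ℝ × ℝ)
    (hA : Function.Injective A) (hfA : ∀ q, toRealPoint (f q) = A (toRealPoint q)) :
    DigitalConvex (S.image f) := by
  classical
  intro p hp
  change toRealPoint p ∈ convexHull ℝ (toRealPoint '' ↑(S.image f)) at hp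
  have hcomm : toRealPoint ∘ f = A ∘ toRealPoint := funext hfA
  rw [Finset.coe_image, ← Set.image_comp, hcomm, Set.image_comp,
    ← AffineMap.image_convexHull] at hp
  obtain ⟨q, hq, hAq⟩ := hp
  obtain ⟨p', rfl⟩ := hf p
  have hq_eq : q = toRealPoint p' := hA (hAq.trans (hfA p'))
  have hp' : toRealPoint p' ∈ convexHull ℝ (toRealPoint '' ↑S) := hq_eq ▸ hq
  exact Finset.mem_image_of_mem f (hS p' hp')

def shear (t a : ℤ) (p : ℤ × ℤ) : ℤ × ℤ := (p.1, p.2 + t * p.1 + a)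

@[simp] lemma shear_fst (t a : ℤ) (p : ℤ × ℤ) : (shear t a p).1 = p.1 := rfl

@[simp] lemma shear_snd (t a : ℤ) (p : ℤ × ℤ) : (shear t a p).2 = p.2 + t * p.1 + a := rfl

lemma shear_neg_shear (t a : ℤ) (p : ℤ × ℤ) : shear t a (shear (-t) (-a) p) = p := by
  ext <;> simp only [shear_fst, shear_snd]; ring

lemma shear_injective (t a : ℤ) : Function.Injective (shear t a) := by
  intro p q h
  have h1 : p.1 = q.1 := by simpa using congrArg Prod.fst h
  have h2 := congrArg Prod.snd h
  simp only [shear_snd, h1] at h2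
  exact Prod.ext h1 (by linarith)

lemma shear_surjective (t a : ℤ) : Function.Surjective (shear t a) :=
  fun p => ⟨shear (-t) (-a) p, shear_neg_shear t a p⟩

def realShear (t a : ℝ) : ℝ × ℝ →ᵃ[ℝ] ℝ × ℝ where
  toFun x := (x.1, x.2 + t * x.1 + a)
  linear := (LinearMap.fst ℝ ℝ ℝ).prod (LinearMap.snd ℝ ℝ ℝ + t • LinearMap.fst ℝ ℝ ℝ)
  map_vadd' p v := by ext <;> simp; ring

lemma realShear_injective (t a : ℝ) : Function.Injective (realShear t a) := by
  intro x y h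
  obtain ⟨h1, h2⟩ :=
    Prod.mk.inj (show (x.1, x.2 + t * x.1 + a) = (y.1, y.2 + t * y.1 + a) from h)
  exact Prod.ext h1 (by rw [h1] at h2; linarith)

lemma DigitalConvex.image_shear {S : Finset (ℤ × ℤ)} (hS : DigitalConvex S) (t a : ℤ) :
    DigitalConvex (S.image (shear t a)) :=
  hS.image_of_affineMap (shear_surjective t a) (realShear t a) (realShear_injective t a)
    fun q => by simp [toRealPoint, realShear, shear]

lemma card_filter_fst_image_shear (S : Finset (ℤ × ℤ)) (t a x : ℤ) :
    ((S.image (shear t a)).filter (fun p => p.1 = x)).card =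
      (S.filter (fun p => p.1 = x)).card := by
  rw [Finset.filter_image, Finset.card_image_of_injective _ (shear_injective t a)]
  rfl

def IsLowestInColumn (S : Finset (ℤ × ℤ)) (x y : ℤ) : Prop :=
  (x, y) ∈ S ∧ ∀ y' : ℤ, (x, y') ∈ S → y ≤ y'

lemma exists_isLowestInColumn {S : Finset (ℤ × ℤ)} {x : ℤ}
    (h : 0 < (S.filter (fun p => p.1 = x)).card) : ∃ y, IsLowestInColumn S x y := by
  obtain ⟨p, hp, hmin⟩ := Finset.exists_min_image _ Prod.snd (Finset.card_pos.mp h)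
  obtain ⟨hpS, rfl⟩ := Finset.mem_filter.mp hp
  exact ⟨p.2, hpS, fun y' hy' => hmin (p.1, y') (Finset.mem_filter.mpr ⟨hy', rfl⟩)⟩

lemma IsLowestInColumn.image_shear {S : Finset (ℤ × ℤ)} {x y : ℤ} (h : IsLowestInColumn S x y)
    (t a : ℤ) : IsLowestInColumn (S.image (shear t a)) x (y + t * x + a) := by
  refine ⟨Finset.mem_image_of_mem (shear t a) h.1, fun y' hy' => ?_⟩
  obtain ⟨q, hq, hqy⟩ := Finset.mem_image.mp hy'
  obtain ⟨rfl, rfl⟩ := Prod.ext_iff.mp hqy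
  simpa using h.2 q.2 hq

/-- If `DT_C(v)` (with `v_0 ≥ 1`, `v_{m-1} ≥ 1`) admits a digital convex
solution in the strip `[0,m-1] × ℤ`, then it admits a solution whose lowest point in
column `0` is the origin and whose lowest point in column `m-1` has
`y`-coordinate in `[0, m-2]`. -/
theorem exists_normalized_solution (m : ℕ) (hm : 2 ≤ m) (v : Fin m → ℕ)
    (hv0 : 1 ≤ v ⟨0, by omega⟩) (hvm : 1 ≤ v ⟨m - 1, by omega⟩)
    (h : ∃ S : Finset (ℤ × ℤ), DigitalConvex S ∧
      (∀ p ∈ S, 0 ≤ p.1 ∧ p.1 ≤ (m : ℤ) - 1) ∧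
      (∀ i : Fin m, (S.filter (fun p => p.1 = (i : ℤ))).card = v i)) :
    ∃ S : Finset (ℤ × ℤ), DigitalConvex S ∧
      (∀ p ∈ S, 0 ≤ p.1 ∧ p.1 ≤ (m : ℤ) - 1) ∧
      (∀ i : Fin m, (S.filter (fun p => p.1 = (i : ℤ))).card = v i) ∧
      (((0 : ℤ), (0 : ℤ)) ∈ S ∧ ∀ y : ℤ, ((0 : ℤ), y) ∈ S → 0 ≤ y) ∧
      (∃ y : ℤ, ((m : ℤ) - 1, y) ∈ S ∧ (∀ y' : ℤ, ((m : ℤ) - 1, y') ∈ S → y ≤ y') ∧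
        0 ≤ y ∧ y ≤ (m : ℤ) - 2) := by
  obtain ⟨S, hconv, hstrip, hxray⟩ := h
  obtain ⟨y₀, hy₀⟩ := exists_isLowestInColumn (S := S) (x := 0) (by
    have := hxray ⟨0, by omega⟩
    rw [Fin.val_mk, Nat.cast_zero] at this
    omega)
  obtain ⟨y₁, hy₁⟩ := exists_isLowestInColumn (S := S) (x := (m : ℤ) - 1) (by
    have := hxray ⟨m - 1, by omega⟩
    rw [Fin.val_mk, Nat.cast_sub (by omega), Nat.cast_one] at this
    omega)
  set n : ℤ := (m : ℤ) - 1
  have hn : 0 < n := by omega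
  set t : ℤ := -((y₁ - y₀) / n)
  have hlow₀ := hy₀.image_shear t (-y₀)
  have hlow₁ := hy₁.image_shear t (-y₀)
  rw [mul_zero, add_zero, add_neg_cancel] at hlow₀
  have hheight : y₁ + t * n + -y₀ = (y₁ - y₀) % n := by rw [Int.emod_def]; ring
  rw [hheight] at hlow₁
  refine ⟨S.image (shear t (-y₀)), hconv.image_shear t (-y₀), ?_,
    fun i => by rw [card_filter_fst_image_shear, hxray], hlow₀, _, hlow₁.1, hlow₁.2,
    Int.emod_nonneg _ hn.ne', by have := Int.emod_lt_of_pos (y₁ - y₀) hn; omega⟩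
  intro p hp
  obtain ⟨q, hq, rfl⟩ := Finset.mem_image.mp hp
  exact hstrip q hq
end

section
/- Let S be a digital convex set contained in [0,m-1]×ℤ with vertical X-ray v, such that (0,0) is the lowest point of S in column 0 and the lowest point in column m-1 has y-coordinate in [0,m-2]. Then any point (i,y) ∈ S has vertical distance at most v_i - 1 to the triangle T_m with vertices (0,0), (m-1,0), (m-1,m-1). -/
open Set

section LinearOrderedField

variable {𝕜 : Type*} [Field 𝕜] [LinearOrder 𝕜] [IsStrictOrderedRing 𝕜]

theorem Convex.mk_mem_of_mem_uIcc {E : Type*} [AddCommGroup E] [Module 𝕜 E] {s : Set (E × 𝕜)}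
    (hs : Convex 𝕜 s) {x : E} {a b c : 𝕜} (ha : (x, a) ∈ s) (hb : (x, b) ∈ s)
    (hc : c ∈ uIcc a b) : (x, c) ∈ s := by
  apply hs.segment_subset ha hb
  rw [← Prod.image_mk_segment_right, segment_eq_uIcc]
  exact mem_image_of_mem _ hc

theorem Convex.mk_div_mul_mem {s : Set (𝕜 × 𝕜)} (hs : Convex 𝕜 s) (h0 : (0, 0) ∈ s)
    {a b x : 𝕜} (hab : (a, b) ∈ s) (ha : 0 < a) (hx : x ∈ Icc 0 a) : (x, x / a * b) ∈ s := by
  have := hs.smul_mem_of_zero_mem h0 hab ⟨div_nonneg hx.1 ha.le, (div_le_one ha).2 hx.2⟩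
  rwa [Prod.smul_mk, smul_eq_mul, smul_eq_mul, div_mul_cancel₀ _ ha.ne'] at this

theorem div_mul_mem_Icc {a b x : 𝕜} (ha : 0 < a) (hx : 0 ≤ x) (hb : b ∈ Icc 0 a) :
    x / a * b ∈ Icc 0 x := by
  have hscale : 0 ≤ x / a := div_nonneg hx ha.le
  exact ⟨mul_nonneg hscale hb.1,
    (mul_le_mul_of_nonneg_left hb.2 hscale).trans_eq (div_mul_cancel₀ x ha.ne')⟩

theorem mk_mem_convexHull_triangle {a x y : 𝕜} (ha : 0 < a) (hy : 0 ≤ y) (hyx : y ≤ x)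
    (hx : x ≤ a) : (x, y) ∈ convexHull 𝕜 ({(0, 0), (a, 0), (a, a)} : Set (𝕜 × 𝕜)) := by
  have hT := convex_convexHull 𝕜 ({(0, 0), (a, 0), (a, a)} : Set (𝕜 × 𝕜))
  have hcolumn b (hb : (a, b) ∈ ({(0, 0), (a, 0), (a, a)} : Set (𝕜 × 𝕜))) :=
    hT.mk_div_mul_mem (subset_convexHull 𝕜 _ (by simp)) (subset_convexHull 𝕜 _ hb) ha
      ⟨hy.trans hyx, hx⟩
  have hbottom := hcolumn 0 (by simp)
  have hdiagonal := hcolumn a (by simp)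
  rw [mul_zero] at hbottom
  rw [div_mul_cancel₀ x ha.ne'] at hdiagonal
  exact hT.mk_mem_of_mem_uIcc hbottom hdiagonal (Icc_subset_uIcc ⟨hy, hyx⟩)

end LinearOrderedField

theorem max_min_mem_uIcc {α : Type*} [LinearOrder α] {lo hi t y : α} (ht : t ∈ Icc lo hi) :
    max lo (min y hi) ∈ uIcc t y := by
  rw [mem_uIcc]; grind

theorem Finset.natAbs_sub_add_one_le_card_filter_fst_eq {S : Finset (ℤ × ℤ)} {x a b : ℤ}
    (h : ∀ z ∈ Finset.uIcc a b, (x, z) ∈ S) :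
    (b - a).natAbs + 1 ≤ (S.filter (fun p => p.1 = x)).card := by
  rw [← Int.card_uIcc]
  exact Finset.card_le_card_of_injOn (fun z => (x, z))
    (fun z hz => Finset.mem_filter.2 ⟨h z hz, rfl⟩) (fun _ _ _ _ h => congrArg Prod.snd h)

theorem DigitalConvex.natAbs_sub_add_one_le_card_filter_fst_eq {S : Finset (ℤ × ℤ)}
    (hS : DigitalConvex S) {x y z : ℤ} {t : ℝ}
    (ht : ((x : ℝ), t) ∈ convexHull ℝ ((fun q : ℤ × ℤ => ((q.1 : ℝ), (q.2 : ℝ))) '' ↑S))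
    (hy : (x, y) ∈ S) (hz : (z : ℝ) ∈ uIcc t y) :
    (y - z).natAbs + 1 ≤ (S.filter (fun p => p.1 = x)).card := by
  refine Finset.natAbs_sub_add_one_le_card_filter_fst_eq fun w hw => hS _ ?_
  have hy' := subset_convexHull ℝ _
    (mem_image_of_mem (fun q : ℤ × ℤ => ((q.1 : ℝ), (q.2 : ℝ))) hy)
  have hw' : (w : ℝ) ∈ uIcc (z : ℝ) y := Int.cast_mono.mapsTo_uIcc (by rwa [← Finset.coe_uIcc])
  exact (convex_convexHull ℝ _).mk_mem_of_mem_uIcc ht hy' (uIcc_subset_uIcc hz right_mem_uIcc hw')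

theorem vertical_distance_to_triangle_general (m : ℕ) (v : Fin m → ℕ)
    (S : Finset (ℤ × ℤ)) (hconv : DigitalConvex S)
    (hxray : ∀ i : Fin m, (S.filter (fun p => p.1 = (i : ℤ))).card = v i)
    (h0 : ((0 : ℤ), (0 : ℤ)) ∈ S ∧ ∀ y : ℤ, ((0 : ℤ), y) ∈ S → 0 ≤ y)
    (hm1 : ∃ y : ℤ, ((m : ℤ) - 1, y) ∈ S ∧ (∀ y' : ℤ, ((m : ℤ) - 1, y') ∈ S → y ≤ y') ∧
      0 ≤ y ∧ y ≤ (m : ℤ) - 2) :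
    ∀ i : Fin m, ∀ y : ℤ, ((i : ℤ), y) ∈ S →
      ∃ y' : ℝ, (((i : ℤ) : ℝ), y') ∈
          convexHull ℝ ({((0 : ℝ), (0 : ℝ)), ((m : ℝ) - 1, 0), ((m : ℝ) - 1, (m : ℝ) - 1)} :
            Set (ℝ × ℝ)) ∧
        |(y : ℝ) - y'| ≤ (v i : ℝ) - 1 := by
  intro i y hy
  obtain ⟨ys, hys, -, hys0, hysm⟩ := hm1
  have hys0' : (0 : ℝ) ≤ ys := by exact_mod_cast hys0
  have hysm' : (ys : ℝ) ≤ m - 2 := by exact_mod_cast hysm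
  have hm : (0 : ℝ) < m - 1 := by linarith
  have hi : ((i : ℤ) : ℝ) ∈ Icc 0 ((m : ℝ) - 1) := by
    refine ⟨by positivity, ?_⟩
    rw [Int.cast_natCast, le_sub_iff_add_le]
    exact_mod_cast i.isLt
  have hmem (p) (hp : p ∈ S) := subset_convexHull ℝ _ (mem_image_of_mem
    (fun q : ℤ × ℤ => ((q.1 : ℝ), (q.2 : ℝ))) hp)
  have hcross := (convex_convexHull ℝ _).mk_div_mul_mem (by simpa using hmem _ h0.1)
    (by simpa using hmem _ hys) hm hi
  have ht := div_mul_mem_Icc hm hi.1 ⟨hys0', by linarith⟩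
  set y' : ℤ := max 0 (min y i)
  have hy' : (y' : ℝ) ∈ uIcc (((i : ℤ) : ℝ) / (m - 1) * ys) y := by
    have := max_min_mem_uIcc (y := (y : ℝ)) ht
    rwa [← Int.cast_zero, ← Int.cast_min, ← Int.cast_max] at this
  refine ⟨y', mk_mem_convexHull_triangle hm (by exact_mod_cast le_max_left _ _)
    (by exact_mod_cast max_le (Int.natCast_nonneg _) (min_le_right _ _)) hi.2, ?_⟩
  have hcard := hconv.natAbs_sub_add_one_le_card_filter_fst_eq hcross hy hy'
  rw [hxray] at hcard
  rw [← Int.cast_sub, ← Int.cast_abs, Int.abs_eq_natAbs, Int.cast_natCast, le_sub_iff_add_le]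
  exact_mod_cast hcard

/-- For a digital convex set `S ⊆ [0,m-1] × ℤ` with vertical X-ray `v`,
whose lowest point in column `0` is the origin and whose lowest point in column `m-1`
has `y`-coordinate in `[0, m-2]`, every point `(i,y) ∈ S` is at vertical distance at most
`v_i - 1` from the triangle `T_m` with vertices `(0,0)`, `(m-1,0)`, `(m-1,m-1)`. -/
theorem vertical_distance_to_triangle (m : ℕ) (hm : 2 ≤ m) (v : Fin m → ℕ)
    (S : Finset (ℤ × ℤ)) (hconv : DigitalConvex S)
    (hstrip : ∀ p ∈ S, 0 ≤ p.1 ∧ p.1 ≤ (m : ℤ) - 1)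
    (hxray : ∀ i : Fin m, (S.filter (fun p => p.1 = (i : ℤ))).card = v i)
    (h0 : ((0 : ℤ), (0 : ℤ)) ∈ S ∧ ∀ y : ℤ, ((0 : ℤ), y) ∈ S → 0 ≤ y)
    (hm1 : ∃ y : ℤ, ((m : ℤ) - 1, y) ∈ S ∧ (∀ y' : ℤ, ((m : ℤ) - 1, y') ∈ S → y ≤ y') ∧
      0 ≤ y ∧ y ≤ (m : ℤ) - 2) :
    ∀ i : Fin m, ∀ y : ℤ, ((i : ℤ), y) ∈ S →
      ∃ y' : ℝ, (((i : ℤ) : ℝ), y') ∈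
          convexHull ℝ ({((0 : ℝ), (0 : ℝ)), ((m : ℝ) - 1, 0), ((m : ℝ) - 1, (m : ℝ) - 1)} :
            Set (ℝ × ℝ)) ∧
        |(y : ℝ) - y'| ≤ (v i : ℝ) - 1 :=
  vertical_distance_to_triangle_general m v S hconv hxray h0 hm1
end
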